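/- arXiv:2312.02417 — 3 statements merged into one kernel-verified Lean document; each statement's English description precedes it below -/
import Mathlib

section
/- The simpler closed form is bounded by the known-variance rate up to a √log(n) factor: min over powers of two 2 ≤ 2^i ≤ n of σ_{2^i}/√(2^i) is at most √(log n) times √(1 / Σ_{j=2}^n 1/σ_j²), given nondecreasing σ's. -/
/-- The simpler closed form is bounded by the known-variance rate up to a √log(n)
factor: for nondecreasing positive σ's, the minimum over powers of two 2 ≤ 2^i ≤ n of
σ_{2^i}/√(2^i) is at most √(log n) · √(1 / Σ_{j=2}^n 1/σ_j²). -/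
theorem stmt_1 (n : ℕ) (hn : 2 ≤ n) (σ : ℕ → ℝ)
    (hpos : ∀ j, 2 ≤ j → j ≤ n → 0 < σ j)
    (hmono : ∀ j k, 2 ≤ j → j ≤ k → k ≤ n → σ j ≤ σ k) :
    ∃ i : ℕ, 1 ≤ i ∧ 2 ^ i ≤ n ∧
      σ (2 ^ i) / Real.sqrt (2 ^ i) ≤
        Real.sqrt (Real.logb 2 n) *
          Real.sqrt (1 / ∑ j ∈ Finset.Icc 2 n, 1 / (σ j) ^ 2) := by
  classical
  set L := Nat.log 2 n with hLdef
  have hL1 : 1 ≤ L := Nat.log_pos (by norm_num) hn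
  have hpowL : 2 ^ L ≤ n := Nat.pow_log_le_self 2 (by omega)
  -- basic facts about 2^i for i in [1, L]
  have hpow_le : ∀ i, i ≤ L → 2 ^ i ≤ n := fun i hi =>
    le_trans (Nat.pow_le_pow_right (by norm_num) hi) hpowL
  have hpow_ge : ∀ i, 1 ≤ i → 2 ≤ 2 ^ i := fun i hi => by
    calc 2 = 2 ^ 1 := by norm_num
    _ ≤ 2 ^ i := Nat.pow_le_pow_right (by norm_num) hi
  have hσpow : ∀ i ∈ Finset.Icc 1 L, 0 < σ (2 ^ i) := by
    intro i hi
    simp only [Finset.mem_Icc] at hi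
    exact hpos _ (hpow_ge i hi.1) (hpow_le i hi.2)
  -- pick the minimizer of g i = σ(2^i)^2 / 2^i
  set g : ℕ → ℝ := fun i => σ (2 ^ i) ^ 2 / 2 ^ i with hg
  obtain ⟨i₀, hi₀mem, hi₀min⟩ :=
    Finset.exists_min_image (Finset.Icc 1 L) g ⟨1, by simp [hL1]⟩
  have hi₀ : 1 ≤ i₀ ∧ i₀ ≤ L := Finset.mem_Icc.mp hi₀mem
  have hσi₀ : 0 < σ (2 ^ i₀) := hσpow i₀ hi₀mem
  have hgpos : ∀ i ∈ Finset.Icc 1 L, 0 < g i := by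
    intro i hi
    exact div_pos (pow_pos (hσpow i hi) 2) (by positivity)
  have hgi₀ : 0 < g i₀ := hgpos i₀ hi₀mem
  set S : ℝ := ∑ j ∈ Finset.Icc 2 n, 1 / (σ j) ^ 2 with hS
  have hSpos : 0 < S := by
    apply Finset.sum_pos
    · intro j hj
      simp only [Finset.mem_Icc] at hj
      have := hpos j hj.1 hj.2
      positivity
    · exact ⟨2, Finset.mem_Icc.mpr ⟨le_refl 2, hn⟩⟩
  -- fiber decomposition along Nat.log 2 j
  have hmaps : ∀ j ∈ Finset.Icc 2 n, Nat.log 2 j ∈ Finset.Icc 1 L := by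
    intro j hj
    simp only [Finset.mem_Icc] at hj ⊢
    constructor
    · exact Nat.log_pos (by norm_num) hj.1
    · exact Nat.log_mono_right hj.2
  have hdecomp : S = ∑ i ∈ Finset.Icc 1 L,
      ∑ j ∈ (Finset.Icc 2 n).filter (fun j => Nat.log 2 j = i), 1 / (σ j) ^ 2 :=
    (Finset.sum_fiberwise_of_maps_to hmaps _).symm
  -- each fiber sum is at most 2^i / σ(2^i)^2 = 1 / g i
  have hfiber : ∀ i ∈ Finset.Icc 1 L,
      (∑ j ∈ (Finset.Icc 2 n).filter (fun j => Nat.log 2 j = i), 1 / (σ j) ^ 2)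
        ≤ 1 / g i := by
    intro i hi
    simp only [Finset.mem_Icc] at hi
    have h2i : 2 ≤ 2 ^ i := hpow_ge i hi.1
    have h2in : 2 ^ i ≤ n := hpow_le i hi.2
    have hσ2i : 0 < σ (2 ^ i) := hpos _ h2i h2in
    have step1 : (∑ j ∈ (Finset.Icc 2 n).filter (fun j => Nat.log 2 j = i), 1 / (σ j) ^ 2)
        ≤ ((Finset.Icc 2 n).filter (fun j => Nat.log 2 j = i)).card • (1 / σ (2 ^ i) ^ 2) := by
      apply Finset.sum_le_card_nsmul
      intro j hj
      simp only [Finset.mem_filter, Finset.mem_Icc] at hj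
      have hjlog : 2 ^ i ≤ j := hj.2 ▸ Nat.pow_log_le_self 2 (by omega)
      have hσj : σ (2 ^ i) ≤ σ j := hmono _ _ h2i hjlog hj.1.2
      have : σ (2 ^ i) ^ 2 ≤ σ j ^ 2 := pow_le_pow_left₀ hσ2i.le hσj 2
      exact one_div_le_one_div_of_le (by positivity) this
    have hcard : ((Finset.Icc 2 n).filter (fun j => Nat.log 2 j = i)).card ≤ 2 ^ i := by
      have hsub : (Finset.Icc 2 n).filter (fun j => Nat.log 2 j = i) ⊆
          Finset.Ico (2 ^ i) (2 ^ (i + 1)) := by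
        intro j hj
        simp only [Finset.mem_filter, Finset.mem_Icc] at hj
        simp only [Finset.mem_Ico]
        constructor
        · exact hj.2 ▸ Nat.pow_log_le_self 2 (by omega)
        · exact hj.2 ▸ Nat.lt_pow_succ_log_self (by norm_num) j
      calc ((Finset.Icc 2 n).filter (fun j => Nat.log 2 j = i)).card
          ≤ (Finset.Ico (2 ^ i) (2 ^ (i + 1))).card := Finset.card_le_card hsub
        _ = 2 ^ (i + 1) - 2 ^ i := by rw [Nat.card_Ico]
        _ = 2 ^ i := by rw [pow_succ]; omega
    calc (∑ j ∈ (Finset.Icc 2 n).filter (fun j => Nat.log 2 j = i), 1 / (σ j) ^ 2)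
        ≤ ((Finset.Icc 2 n).filter (fun j => Nat.log 2 j = i)).card • (1 / σ (2 ^ i) ^ 2) :=
          step1
      _ ≤ (2 ^ i : ℕ) • (1 / σ (2 ^ i) ^ 2) := by
          apply nsmul_le_nsmul_left (by positivity) hcard
      _ = (2 ^ i : ℝ) / σ (2 ^ i) ^ 2 := by
          simp [nsmul_eq_mul]; ring
      _ = 1 / g i := by
          rw [hg]
          field_simp
  -- hence S ≤ L / g i₀
  have hSle : S ≤ L * (1 / g i₀) := by
    rw [hdecomp]
    calc (∑ i ∈ Finset.Icc 1 L,
        ∑ j ∈ (Finset.Icc 2 n).filter (fun j => Nat.log 2 j = i), 1 / (σ j) ^ 2)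
        ≤ ∑ i ∈ Finset.Icc 1 L, 1 / g i := Finset.sum_le_sum hfiber
      _ ≤ ∑ i ∈ Finset.Icc 1 L, 1 / g i₀ := by
          apply Finset.sum_le_sum
          intro i hi
          exact one_div_le_one_div_of_le hgi₀ (hi₀min i hi)
      _ = (Finset.Icc 1 L).card * (1 / g i₀) := by rw [Finset.sum_const, nsmul_eq_mul]
      _ = L * (1 / g i₀) := by rw [Nat.card_Icc]; norm_num
  have hgS : g i₀ ≤ (L : ℝ) / S := by
    rw [le_div_iff₀ hSpos]
    calc g i₀ * S ≤ g i₀ * (L * (1 / g i₀)) := by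
          exact mul_le_mul_of_nonneg_left hSle hgi₀.le
      _ = L := by field_simp
  -- L ≤ logb 2 n
  have hLlog : (L : ℝ) ≤ Real.logb 2 n := by
    have h1 : ((2 : ℝ) ^ L) ≤ (n : ℝ) := by exact_mod_cast hpowL
    have h2 : Real.logb 2 ((2 : ℝ) ^ L) ≤ Real.logb 2 n :=
      Real.logb_le_logb_of_le (by norm_num) (by positivity) h1
    simpa [Real.logb_pow, Real.logb_self_eq_one (by norm_num : (1:ℝ) < 2)] using h2
  refine ⟨i₀, hi₀.1, hpow_le i₀ hi₀.2, ?_⟩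
  have hsqrt_eq : σ (2 ^ i₀) / Real.sqrt (2 ^ i₀) = Real.sqrt (g i₀) := by
    rw [hg]
    simp only []
    rw [Real.sqrt_div (sq_nonneg _), Real.sqrt_sq hσi₀.le]
  rw [hsqrt_eq]
  have hlogpos : (0 : ℝ) ≤ Real.logb 2 n := le_trans (Nat.cast_nonneg L) hLlog
  have h1 : g i₀ ≤ Real.logb 2 n * (1 / S) := by
    calc g i₀ ≤ (L : ℝ) / S := hgS
      _ = (L : ℝ) * (1 / S) := by ring
      _ ≤ Real.logb 2 n * (1 / S) := by
          apply mul_le_mul_of_nonneg_right hLlog (by positivity)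
  calc Real.sqrt (g i₀) ≤ Real.sqrt (Real.logb 2 n * (1 / S)) := Real.sqrt_le_sqrt h1
    _ = Real.sqrt (Real.logb 2 n) * Real.sqrt (1 / S) := Real.sqrt_mul hlogpos _
end

section
/- Function classes induced by balance tests satisfy 18-representative labeling: if F maps reals to a label set Y of size at most 9 such that for every f ∈ F and every sorted input list the preimage of each label is a contiguous range of the sorted inputs, then for any input X of length n and any f ∈ F there exists a subset L of indices with |L| ≤ 18 such that any g ∈ F agreeing with f on the entries indexed by L agrees with f on all entries. -/
/-!
The labels on a chain are pinned down by the two ends of each fiber: if `g` has order-connected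
fibers and agrees with `f` at the least and greatest point of the fiber of `f` through `i`, then
`g` is constant on the interval between them, which contains `i`. There are at most two such
ends per label, hence at most `2 |Y|` points.
-/

open Finset

section

variable {ι Y : Type*} [LinearOrder ι] [Fintype ι] [DecidableEq Y]

def fiberEnds (f : ι → Y) (y : Y) : Finset ι :=
  if h : (univ.filter (f · = y)).Nonempty then {(univ.filter (f · = y)).min' h,
    (univ.filter (f · = y)).max' h} else ∅

lemma card_fiberEnds_le (f : ι → Y) (y : Y) : #(fiberEnds f y) ≤ 2 := by
  unfold fiberEnds
  split
  · exact card_le_two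
  · simp

def labelEndpoints [Fintype Y] (f : ι → Y) : Finset ι :=
  univ.biUnion (fiberEnds f)

lemma card_labelEndpoints_le [Fintype Y] (f : ι → Y) :
    #(labelEndpoints f) ≤ 2 * Fintype.card Y :=
  calc #(labelEndpoints f) ≤ ∑ y, #(fiberEnds f y) := card_biUnion_le
    _ ≤ ∑ _y : Y, 2 := sum_le_sum fun y _ => card_fiberEnds_le f y
    _ = 2 * Fintype.card Y := by rw [sum_const, card_univ, smul_eq_mul, mul_comm]

lemma eq_of_eqOn_labelEndpoints [Fintype Y] {f g : ι → Y}
    (hg : ∀ y, (g ⁻¹' {y}).OrdConnected) (hfg : ∀ i ∈ labelEndpoints f, g i = f i) :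
    g = f := by
  funext i
  set s := univ.filter (f · = f i)
  have hi : i ∈ s := by simp [s]
  have hne : s.Nonempty := ⟨i, hi⟩
  have hends : fiberEnds f (f i) = {s.min' hne, s.max' hne} := dif_pos hne
  have hmem {j} (hj : j ∈ fiberEnds f (f i)) : g j = f i := by
    rw [hfg j (mem_biUnion.2 ⟨f i, mem_univ _, hj⟩)]
    rw [hends, mem_insert, mem_singleton] at hj
    rcases hj with rfl | rfl
    · exact (mem_filter.1 (s.min'_mem hne)).2
    · exact (mem_filter.1 (s.max'_mem hne)).2
  have hmin : g (s.min' hne) = f i := hmem (by simp [hends])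
  have hmax : g (s.max' hne) = f i := hmem (by simp [hends])
  exact (hg (f i)).out hmin hmax ⟨s.min'_le i hi, s.le_max' i hi⟩
end

theorem stmt_5_general {Y : Type*} [Fintype Y] (hY : Fintype.card Y ≤ 9)
    (n : ℕ) (X : Fin n → ℝ)
    (F : Set (ℝ → Y))
    (hcontig : ∀ f ∈ F, ∀ i j k : Fin n, i ≤ j → j ≤ k →
      f (X i) = f (X k) → f (X j) = f (X i)) :
    ∀ f ∈ F, ∃ L : Finset (Fin n), L.card ≤ 18 ∧
      ∀ g ∈ F, (∀ i ∈ L, g (X i) = f (X i)) → ∀ i, g (X i) = f (X i) := by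
  classical
  intro f _
  refine ⟨labelEndpoints (f ∘ X), (card_labelEndpoints_le _).trans (by omega), ?_⟩
  intro g hg hagree
  have hfibers : ∀ y, ((g ∘ X) ⁻¹' {y}).OrdConnected := fun y =>
    ⟨fun a ha b hb j hj => (hcontig g hg a j b hj.1 hj.2 (ha.trans hb.symm)).trans ha⟩
  exact congrFun (eq_of_eqOn_labelEndpoints hfibers hagree)

/-- Balance-test function classes satisfy 18-representative labeling: if every
f ∈ F maps into a label set Y with |Y| ≤ 9 and has the contiguous-preimage property
on the sorted input X (the indices mapped to a given label form a contiguous range),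
then for every f ∈ F there is a set L of at most 18 indices such that any g ∈ F
agreeing with f on the entries indexed by L agrees with f on all entries. -/
theorem stmt_5 {Y : Type*} [Fintype Y] (hY : Fintype.card Y ≤ 9)
    (n : ℕ) (X : Fin n → ℝ) (hX : Monotone X)
    (F : Set (ℝ → Y))
    (hcontig : ∀ f ∈ F, ∀ i j k : Fin n, i ≤ j → j ≤ k →
      f (X i) = f (X k) → f (X j) = f (X i)) :
    ∀ f ∈ F, ∃ L : Finset (Fin n), L.card ≤ 18 ∧
      ∀ g ∈ F, (∀ i ∈ L, g (X i) = f (X i)) → ∀ i, g (X i) = f (X i) :=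
  stmt_5_general hY n X F hcontig
end

section
/- Closest-pair lower bound: with independent Gaussians X_i ~ N(μ, σ_i²), for any constant δ there is a constant C such that with probability at least 1 − 1/(2n^δ), every pair i ≠ j with max(i,j) ≥ k satisfies |X_i − X_j| > σ_k / n^C; in particular the gap between the closest k samples r_k = min_j (Y_{j+k} − Y_j) exceeds σ_k / n^C simultaneously for all k. -/
/-! The density of `N(μ, σ²)` is bounded by `1 / (√(2π) σ)`, so for independent `X_i` and
`X_j ~ N(μ, σ_j²)`, conditioning on `X_i` shows `|X_i - X_j| ≤ ε` with probability at most
`2ε / (√(2π) σ_j) ≤ ε / σ_j`. With `ε = σ_j / n^C` and a union bound over the fewer than `n²`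
ordered pairs, outside an event of probability `n^(2 - C)` every pair satisfies
`|X_i - X_j| > σ_j / n^C`, hence `> σ_k / n^C` for all `k ≤ max(i, j)` by monotonicity of `σ`.
For `C = δ + 3` and `n ≥ 2` that probability is at most `1 / (2 n^δ)`. -/

open MeasureTheory ProbabilityTheory Real
open scoped NNReal ENNReal

lemma gaussianPDFReal_le_inv_sqrt (m : ℝ) (v : ℝ≥0) (x : ℝ) :
    gaussianPDFReal m v x ≤ (√(2 * π * v))⁻¹ := by
  rw [gaussianPDFReal_def]
  refine mul_le_of_le_one_right (by positivity) (exp_le_one_iff.2 ?_)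
  exact div_nonpos_of_nonpos_of_nonneg (neg_nonpos.2 (sq_nonneg _)) (by positivity)

lemma gaussianReal_Icc_le (m : ℝ) {v : ℝ≥0} (hv : v ≠ 0) (a b : ℝ) :
    gaussianReal m v (Set.Icc a b) ≤ ENNReal.ofReal ((b - a) / √(2 * π * v)) := by
  rw [gaussianReal_apply m hv]
  calc ∫⁻ x in Set.Icc a b, gaussianPDF m v x
      ≤ ∫⁻ _ in Set.Icc a b, ENNReal.ofReal (√(2 * π * v))⁻¹ :=
        lintegral_mono fun x => ENNReal.ofReal_le_ofReal (gaussianPDFReal_le_inv_sqrt m v x)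
    _ = ENNReal.ofReal ((b - a) / √(2 * π * v)) := by
        rw [setLIntegral_const, Real.volume_Icc, ← ENNReal.ofReal_mul (by positivity),
          div_eq_inv_mul]

lemma gaussianReal_Icc_sub_add_le {σ : ℝ} (hσ : 0 < σ) (m x ε : ℝ) :
    gaussianReal m (σ ^ 2).toNNReal (Set.Icc (x - ε) (x + ε)) ≤ ENNReal.ofReal (ε / σ) := by
  have hv : (σ ^ 2).toNNReal ≠ 0 := (Real.toNNReal_pos.2 (by positivity)).ne'
  refine (gaussianReal_Icc_le m hv _ _).trans (ENNReal.ofReal_le_ofReal_iff'.2 ?_)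
  have hsqrt : √(2 * π * (σ ^ 2).toNNReal) = √(2 * π) * σ := by
    rw [Real.coe_toNNReal _ (sq_nonneg σ), Real.sqrt_mul (by positivity), Real.sqrt_sq hσ.le]
  have htwo : 2 ≤ √(2 * π) := Real.le_sqrt_of_sq_le (by nlinarith [pi_gt_three])
  rw [hsqrt, show x + ε - (x - ε) = 2 * ε by ring]
  rcases le_or_gt 0 ε with hε | hε
  · left
    rw [div_le_div_iff₀ (by positivity) hσ]
    nlinarith [mul_le_mul_of_nonneg_left htwo (mul_nonneg hε hσ.le)]
  · right
    exact div_nonpos_of_nonpos_of_nonneg (by linarith) (by positivity)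

lemma measure_abs_sub_le_le_of_indepFun {Ω : Type*} [MeasurableSpace Ω] {P : Measure Ω}
    [IsProbabilityMeasure P] {X Y : Ω → ℝ} (hX : AEMeasurable X P) (hY : AEMeasurable Y P)
    (hXY : IndepFun X Y P) {ε : ℝ} {c : ℝ≥0∞}
    (hc : ∀ x, P.map Y (Set.Icc (x - ε) (x + ε)) ≤ c) :
    P {ω | |X ω - Y ω| ≤ ε} ≤ c := by
  have := Measure.isProbabilityMeasure_map hX
  have hS : MeasurableSet {p : ℝ × ℝ | |p.1 - p.2| ≤ ε} :=
    measurableSet_le (measurable_fst.sub measurable_snd).abs measurable_const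
  have hslice : ∀ x, Prod.mk x ⁻¹' {p : ℝ × ℝ | |p.1 - p.2| ≤ ε} = Set.Icc (x - ε) (x + ε) := by
    intro x
    ext y
    simp only [Set.mem_preimage, Set.mem_ofPred_eq, Set.mem_Icc, abs_le]
    constructor <;> rintro ⟨h₁, h₂⟩ <;> constructor <;> linarith
  calc P {ω | |X ω - Y ω| ≤ ε}
      = (P.map X).prod (P.map Y) {p | |p.1 - p.2| ≤ ε} := by
        rw [← (indepFun_iff_map_prod_eq_prod_map_map hX hY).1 hXY,
          Measure.map_apply_of_aemeasurable (hX.prodMk hY) hS]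
        rfl
    _ = ∫⁻ x, P.map Y (Set.Icc (x - ε) (x + ε)) ∂(P.map X) := by
        simp only [Measure.prod_apply hS, hslice]
    _ ≤ ∫⁻ _, c ∂(P.map X) := lintegral_mono hc
    _ = c := by rw [lintegral_const, measure_univ, mul_one]

lemma measure_abs_sub_le_le_of_indepFun_gaussianReal {Ω : Type*} [MeasurableSpace Ω]
    {P : Measure Ω} [IsProbabilityMeasure P] {X Y : Ω → ℝ} (hX : AEMeasurable X P)
    (hY : AEMeasurable Y P) (hXY : IndepFun X Y P) {m σ : ℝ} (hσ : 0 < σ)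
    (hY_law : P.map Y = gaussianReal m (σ ^ 2).toNNReal) (ε : ℝ) :
    P {ω | |X ω - Y ω| ≤ ε} ≤ ENNReal.ofReal (ε / σ) :=
  measure_abs_sub_le_le_of_indepFun hX hY hXY fun x =>
    hY_law ▸ gaussianReal_Icc_sub_add_le hσ m x ε

lemma ofReal_one_sub_le_measure_of_compl_subset {Ω : Type*} [MeasurableSpace Ω]
    {P : Measure Ω} [IsProbabilityMeasure P] {B S : Set Ω} {p : ℝ} (hp : 0 ≤ p)
    (hB : P B ≤ ENNReal.ofReal p) (hS : Bᶜ ⊆ S) :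
    ENNReal.ofReal (1 - p) ≤ P S :=
  calc ENNReal.ofReal (1 - p) = 1 - ENNReal.ofReal p := by
        rw [ENNReal.ofReal_sub _ hp, ENNReal.ofReal_one]
    _ ≤ 1 - P B := tsub_le_tsub_left hB 1
    _ ≤ P Bᶜ := tsub_le_iff_left.2 (measure_univ (μ := P) ▸ measure_univ_le_add_compl B)
    _ ≤ P S := measure_mono hS

lemma lt_abs_sub_of_le_or_le {ι : Type*} [Preorder ι] {f x : ι → ℝ} (hf : Monotone f)
    (h : ∀ i j, i ≠ j → f j < |x i - x j|) {i j k : ι} (hij : i ≠ j) (hk : k ≤ i ∨ k ≤ j) :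
    f k < |x i - x j| := by
  rcases hk with hki | hkj
  · rw [abs_sub_comm]
    exact (hf hki).trans_lt (h j i hij.symm)
  · exact (hf hkj).trans_lt (h i j hij)

lemma mul_self_mul_inv_rpow_add_three_le {x : ℝ} (hx : 2 ≤ x) (δ : ℝ) :
    x * x * (x ^ (δ + 3))⁻¹ ≤ 1 / (2 * x ^ δ) := by
  have hx₀ : 0 < x := by linarith
  have hxδ : 0 < x ^ δ := by positivity
  rw [Real.rpow_add hx₀, Real.rpow_ofNat, ← div_eq_mul_inv, div_le_div_iff₀ (by positivity)
    (by positivity)]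
  nlinarith [mul_le_mul_of_nonneg_left hx (le_of_lt (mul_pos hxδ (mul_pos hx₀ hx₀)))]

/-- Closest-pair lower bound: for independent Gaussians X_i ~ N(μ, σ_i²) with
σ_1 ≤ ... ≤ σ_n, for any constant δ > 0 there is a constant C such that with
probability at least 1 − 1/(2n^δ), every pair i ≠ j with max(i,j) ≥ k satisfies
|X_i − X_j| > σ_k / n^C; in particular the gap between the closest k samples
exceeds σ_k / n^C simultaneously for all k. -/
theorem stmt_8 (δ : ℝ) (hδ : 0 < δ) :
    ∃ C : ℝ, 0 < C ∧
      ∀ (n : ℕ), 2 ≤ n →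
      ∀ (Ω : Type) (mΩ : MeasureSpace Ω) (hP : IsProbabilityMeasure (ℙ : Measure Ω))
        (μ : ℝ) (σ : Fin n → ℝ) (hσ : ∀ i, 0 < σ i) (hmono : Monotone σ)
        (X : Fin n → Ω → ℝ) (hmeas : ∀ i, Measurable (X i))
        (hindep : iIndepFun X ℙ)
        (hlaw : ∀ i, Measure.map (X i) ℙ = gaussianReal μ (Real.toNNReal ((σ i) ^ 2))),
      ENNReal.ofReal (1 - 1 / (2 * (n : ℝ) ^ δ)) ≤
        ℙ {ω | ∀ i j k : Fin n, i ≠ j → (k ≤ i ∨ k ≤ j) →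
          σ k / (n : ℝ) ^ C < |X i ω - X j ω|} := by
  refine ⟨δ + 3, by linarith, fun n hn Ω _ _ μ σ hσ hmono X hmeas hindep hlaw => ?_⟩
  have hn' : (2 : ℝ) ≤ n := by exact_mod_cast hn
  set r := (n : ℝ) ^ (δ + 3)
  have hr : 0 < r := by positivity
  set bad : Fin n × Fin n → Set Ω := fun p => {ω | |X p.1 ω - X p.2 ω| ≤ σ p.2 / r}
  have hbad : ∀ p ∈ Finset.univ.offDiag, ℙ (bad p) ≤ ENNReal.ofReal r⁻¹ := by
    rintro ⟨i, j⟩ hij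
    have := measure_abs_sub_le_le_of_indepFun_gaussianReal (hmeas i).aemeasurable
      (hmeas j).aemeasurable (hindep.indepFun (Finset.mem_offDiag.1 hij).2.2) (hσ j) (hlaw j)
      (σ j / r)
    rwa [div_div_cancel_left' (hσ j).ne'] at this
  have hunion : ℙ (⋃ p ∈ Finset.univ.offDiag, bad p) ≤ ENNReal.ofReal (1 / (2 * n ^ δ)) :=
    calc ℙ (⋃ p ∈ Finset.univ.offDiag, bad p)
        ≤ ∑ p ∈ Finset.univ.offDiag, ℙ (bad p) := measure_biUnion_finset_le _ _
      _ ≤ Finset.univ.offDiag.card • ENNReal.ofReal r⁻¹ := Finset.sum_le_card_nsmul _ _ _ hbad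
      _ ≤ (n * n) • ENNReal.ofReal r⁻¹ := by
          gcongr
          simp [Finset.offDiag_card]
      _ = ENNReal.ofReal (n * n * r⁻¹) := by
          rw [← ENNReal.ofReal_nsmul, nsmul_eq_mul]
          push_cast
          rfl
      _ ≤ ENNReal.ofReal (1 / (2 * n ^ δ)) :=
          ENNReal.ofReal_le_ofReal (mul_self_mul_inv_rpow_add_three_le hn' δ)
  refine ofReal_one_sub_le_measure_of_compl_subset (by positivity) hunion fun ω hω => ?_
  simp only [Set.mem_compl_iff, Set.mem_iUnion, Finset.mem_offDiag, Finset.mem_univ,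
    true_and, not_exists, bad, Set.mem_ofPred_eq, not_le] at hω
  exact fun i j k hij hk =>
    lt_abs_sub_of_le_or_le (x := (X · ω)) (hmono.div_const hr.le) (fun i j => hω (i, j)) hij hk
end
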